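/- Let G=(V,E) be a finite simple undirected graph, fix a positive integer T, and let A ⊆ V be a set of vertices with μ(A) ≤ (2/3)·μ(V) and φ(A) ≤ 1/(100·T). Then there exists a subset A_T ⊆ A with μ(A_T) ≥ μ(A)/2 such that for every x ∈ A_T, with probability at least 7/9, a sample path (S₀, S₁, …, S_T) from the volume-biased evolving set process started from S₀ = {x} satisfies all of: (1) φ(S_t) < 3·θ_T for some t ∈ {0,…,T}, where θ_T = √(4 T^{-1} log μ(V)); (2) μ(S_j) ≤ (3/4)·μ(V) for all j ∈ {0,…,T}; and (3) μ(S_j ∩ A) ≥ (9/10)·μ(S_j) for all j ∈ {0,…,T}. -/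

import Mathlib

/-!
For the volume-biased process started at `{x}`, two bad events are bounded.

*The conductance stays `≥ c`.* Splitting the uniform threshold at `1/2` and applying
Cauchy–Schwarz to each half gives `E[√μ(S₁)] ≤ (1 - φ(S)²/8) √μ(S)` for one ESP step
(Morris–Peres), that is, `Ê[μ(S₁)^{-1/2}] ≤ (1 - φ(S)²/8) μ(S)^{-1/2}` for one volume-biased
step. Along paths staying at conductance `≥ c` this decays geometrically; as `μ(S_T) ≤ μ(V)`, the
probability is at most `√μ(V) (1 - c²/8)^T ≤ μ(V)^{-4} ≤ 1/81` for `c = 3θ_T`, because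
`μ(V) ≥ 3` under the hypotheses.

*A tenth of some `μ(S_j)` lies outside `A`.* Let `τ` be the first such time. The change of
measure `μ(S₀) Ê[F] = E[μ(S_t) F]` bounds `d(x) P̂(τ ≤ T)` by `10 E[μ(S_{τ∧T} \ A)]` for the
plain process. One ESP step raises `E[μ(S \ A)]` by at most the leakage
`∑_{z ∈ S ∩ A} d(z) p(z, Aᶜ)`, and `P(z ∈ S_t) = p_t(z, S₀)`; summing over `x ∈ A` with weights
`d(x)` gives at most `5 T ∂(A) ≤ μ(A)/20`.

By Markov's inequality the vertices of `A` where the two probabilities add up to more than `2/9`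
carry at most half of `μ(A)`; on every path avoiding both events, conditions (1)–(3) hold.
-/

open scoped Classical symmDiff

noncomputable section

variable {V : Type*} [Fintype V] [DecidableEq V]

/-- The volume `μ(S)` of a set of vertices: the sum of the degrees. -/
def vol (G : SimpleGraph V) [DecidableRel G.Adj] (S : Finset V) : ℝ :=
  ∑ x ∈ S, (G.degree x : ℝ)

/-- The number of edges leaving `S`, i.e. `∂(S) = e(S, Sᶜ)`. -/
def bdry (G : SimpleGraph V) [DecidableRel G.Adj] (S : Finset V) : ℝ :=
  ∑ x ∈ S, ((Sᶜ.filter (G.Adj x)).card : ℝ)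

/-- The conductance `φ(S) = ∂(S)/μ(S)`. -/
def phiCond (G : SimpleGraph V) [DecidableRel G.Adj] (S : Finset V) : ℝ :=
  bdry G S / vol G S

/-- The lazy random walk kernel `p(x,y)`: `1/2` if `x = y`, `1/(2 d(x))` if `x ~ y`,
and `0` otherwise. -/
def walkP (G : SimpleGraph V) [DecidableRel G.Adj] (x y : V) : ℝ :=
  if x = y then 1/2 else if G.Adj x y then 1 / (2 * (G.degree x : ℝ)) else 0

/-- `p(x,S) = Σ_{y∈S} p(x,y)`. -/
def pset (G : SimpleGraph V) [DecidableRel G.Adj] (x : V) (S : Finset V) : ℝ :=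
  ∑ y ∈ S, walkP G x y

/-- One step of the evolving set process from `S` with threshold `u`:
`S₁ = {y : p(y,S) ≥ u}`. -/
def esStep (G : SimpleGraph V) [DecidableRel G.Adj] (S : Finset V) (u : ℝ) : Finset V :=
  Finset.univ.filter fun y => u ≤ pset G y S

/-- The ESP transition kernel `K(S,S')`: the probability, for a uniform threshold
`U ∈ [0,1]`, that `{y : p(y,S) ≥ U} = S'`. -/
def Kk (G : SimpleGraph V) [DecidableRel G.Adj] (S S' : Finset V) : ℝ :=
  (MeasureTheory.volume {u : ℝ | u ∈ Set.Icc (0:ℝ) 1 ∧ esStep G S u = S'}).toReal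

/-- The volume-biased ESP transition kernel `K̂(S,S') = (μ(S')/μ(S)) K(S,S')`. -/
def Khat (G : SimpleGraph V) [DecidableRel G.Adj] (S S' : Finset V) : ℝ :=
  vol G S' / vol G S * Kk G S S'

/-- Expectation of `f` over length-`(t+1)` sample paths `(S₀, …, S_t)` of the Markov
chain with transition kernel `κ` started at `S₀`. -/
def Epath (κ : Finset V → Finset V → ℝ) (S₀ : Finset V) (t : ℕ)
    (f : (Fin (t+1) → Finset V) → ℝ) : ℝ :=
  ∑ w : Fin (t+1) → Finset V,
    if w 0 = S₀ then (∏ j : Fin t, κ (w j.castSucc) (w j.succ)) * f w else 0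


open Finset MeasureTheory Matrix

section Real

lemma sqrt_one_add_add_sqrt_one_sub_le {x : ℝ} (h₀ : 0 ≤ x) (h₁ : x ≤ 1) :
    √(1 + x) + √(1 - x) ≤ 2 - x ^ 2 / 4 := by
  have hx := pow_nonneg h₀
  -- third-order Taylor bounds, valid on `[0, 1]`
  have hp : √(1 + x) ≤ 1 + x / 2 - x ^ 2 / 8 + x ^ 3 / 16 :=
    Real.sqrt_le_iff.2 ⟨by nlinarith, by nlinarith [hx 3, hx 4, hx 5, hx 6]⟩
  have hm : √(1 - x) ≤ 1 - x / 2 - x ^ 2 / 8 - x ^ 3 / 16 :=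
    Real.sqrt_le_iff.2 ⟨by nlinarith, by nlinarith [hx 3, hx 4, hx 5, hx 6]⟩
  linarith

lemma sqrt_add_add_sqrt_sub_le {m b : ℝ} (hb : 0 ≤ b) (hbm : b ≤ m) :
    √(m + b) + √(m - b) ≤ 2 * √m * (1 - (b / m) ^ 2 / 8) := by
  rcases (hb.trans hbm).eq_or_lt with rfl | hm
  · simp [le_antisymm hbm hb]
  have hx := sqrt_one_add_add_sqrt_one_sub_le (div_nonneg hb hm.le) (div_le_one_of_le₀ hbm hm.le)
  calc √(m + b) + √(m - b) = √m * (√(1 + b / m) + √(1 - b / m)) := by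
        rw [mul_add, ← Real.sqrt_mul hm.le, ← Real.sqrt_mul hm.le]
        congr 2 <;> field_simp
    _ ≤ √m * (2 - (b / m) ^ 2 / 4) := by gcongr
    _ = 2 * √m * (1 - (b / m) ^ 2 / 8) := by ring

lemma sum_mul_sqrt_le_sqrt_mul {ι : Type*} (s : Finset ι) {p f : ι → ℝ} (hp : ∀ i, 0 ≤ p i)
    (hf : ∀ i, 0 ≤ f i) :
    ∑ i ∈ s, p i * √(f i) ≤ √((∑ i ∈ s, p i) * ∑ i ∈ s, p i * f i) := by
  rw [Real.sqrt_mul (sum_nonneg fun i _ => hp i)]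
  convert Real.sum_sqrt_mul_sqrt_le s hp fun i => mul_nonneg (hp i) (hf i) using 2 with i
  rw [Real.sqrt_mul (hp i), ← mul_assoc, Real.mul_self_sqrt (hp i)]

lemma sqrt_mul_max_pow_le {m : ℝ} (hm : 3 ≤ m) {T : ℕ} (hT : 0 < T) :
    √m * max 0 (1 - (3 * √(4 * Real.log m / T)) ^ 2 / 8) ^ T ≤ 1 / 81 := by
  have hm0 : 0 < m := by linarith
  have haT : (3 * √(4 * Real.log m / T)) ^ 2 / 8 * T = 9 / 2 * Real.log m := by
    have hlog : 0 ≤ Real.log m := Real.log_nonneg (by linarith)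
    rw [mul_pow, Real.sq_sqrt (by positivity)]
    field_simp
    ring
  set a := (3 * √(4 * Real.log m / T)) ^ 2 / 8
  have hmax : max 0 (1 - a) ≤ Real.exp (-a) :=
    max_le (Real.exp_pos _).le (by linarith [Real.add_one_le_exp (-a)])
  calc √m * max 0 (1 - a) ^ T ≤ √m * Real.exp (-a) ^ T := by gcongr
    _ = m ^ (1 / 2 + -(9 / 2) : ℝ) := by
        rw [← Real.exp_nat_mul, Real.rpow_add hm0, Real.sqrt_eq_rpow,
          Real.rpow_def_of_pos hm0 (-(9 / 2))]
        congr 2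
        linarith
    _ ≤ 3 ^ (1 / 2 + -(9 / 2) : ℝ) := Real.rpow_le_rpow_of_nonpos (by norm_num) hm (by norm_num)
    _ = 1 / 81 := by
        rw [show (1 / 2 + -(9 / 2) : ℝ) = -(4 : ℕ) by norm_num, Real.rpow_neg (by norm_num),
          Real.rpow_natCast]
        norm_num

lemma volume_real_Icc_zero_inter_Iic {a p : ℝ} (ha : 0 ≤ a) (hp : 0 ≤ p) :
    volume.real (Set.Icc 0 a ∩ Set.Iic p) = min a p := by
  have : Set.Icc 0 a ∩ Set.Iic p = Set.Icc 0 (min a p) := by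
    ext u
    simp [and_assoc]
  rw [this, Real.volume_real_Icc, sub_zero, max_eq_left (le_min ha hp)]

end Real

section Volume

omit [DecidableEq V]

variable {G : SimpleGraph V} [DecidableRel G.Adj]

lemma vol_nonneg (S : Finset V) : 0 ≤ vol G S :=
  sum_nonneg fun _ _ => Nat.cast_nonneg _

lemma vol_mono {S T : Finset V} (h : S ⊆ T) : vol G S ≤ vol G T :=
  sum_le_sum_of_subset_of_nonneg h fun _ _ _ => Nat.cast_nonneg _

lemma vol_filter_degree_pos (S : Finset V) : vol G (S.filter (0 < G.degree ·)) = vol G S := by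
  refine sum_filter_of_ne fun x _ hx => ?_
  exact Nat.pos_of_ne_zero (by exact_mod_cast hx)

lemma mul_vol_filter_lt_le (S : Finset V) {f : V → ℝ} (hf : ∀ x, 0 ≤ f x) (c : ℝ) :
    c * vol G (S.filter (c < f ·)) ≤ ∑ x ∈ S, G.degree x * f x := by
  rw [vol, mul_sum]
  calc ∑ x ∈ S.filter (c < f ·), c * G.degree x ≤ ∑ x ∈ S.filter (c < f ·), G.degree x * f x :=
        sum_le_sum fun x hx => by
          rw [mul_comm]
          exact mul_le_mul_of_nonneg_left (mem_filter.1 hx).2.le (Nat.cast_nonneg _)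
    _ ≤ ∑ x ∈ S, G.degree x * f x :=
        sum_le_sum_of_subset_of_nonneg (filter_subset _ S) fun x _ _ =>
          mul_nonneg (Nat.cast_nonneg _) (hf x)

lemma half_vol_le_vol_filter_le (S : Finset V) {f : V → ℝ} (hf : ∀ x, 0 ≤ f x) {c : ℝ}
    (hc : 0 < c) (h : ∑ x ∈ S, G.degree x * f x ≤ c / 2 * vol G S) :
    vol G S / 2 ≤ vol G (S.filter (f · ≤ c)) := by
  have hsplit : vol G (S.filter (f · ≤ c)) + vol G (S.filter fun x => ¬ f x ≤ c) = vol G S :=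
    sum_filter_add_sum_filter_not _ _ _
  simp only [not_le] at hsplit
  have hlarge : vol G (S.filter (c < f ·)) ≤ vol G S / 2 :=
    le_of_mul_le_mul_left (by linarith [mul_vol_filter_lt_le (G := G) S hf c]) hc
  linarith

end Volume

section Graph

variable {G : SimpleGraph V} [DecidableRel G.Adj]

lemma bdry_nonneg (S : Finset V) : 0 ≤ bdry G S :=
  sum_nonneg fun _ _ => Nat.cast_nonneg _

lemma bdry_le_vol (S : Finset V) : bdry G S ≤ vol G S := by
  refine sum_le_sum fun x _ => ?_
  rw [← G.card_neighborFinset_eq_degree]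
  exact_mod_cast card_le_card fun y hy => by simpa using (mem_filter.1 hy).2

lemma vol_pos_of_phiCond_pos {S : Finset V} (h : 0 < phiCond G S) : 0 < vol G S := by
  refine (vol_nonneg S).lt_of_ne fun h0 => ?_
  simp [phiCond, ← h0] at h

lemma two_le_vol_of_phiCond_le_half {A : Finset V} (hA : 0 < vol G A)
    (hφ : phiCond G A ≤ 1 / 2) : 2 ≤ vol G A := by
  obtain ⟨x, hxA, hx⟩ : ∃ x ∈ A, (0 : ℝ) < G.degree x :=
    exists_lt_of_sum_lt (by simpa [vol] using hA)
  have hx1 : (1 : ℝ) ≤ G.degree x := Nat.one_le_cast.2 (by exact_mod_cast hx)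
  obtain ⟨y, hxy⟩ := (G.degree_pos_iff_exists_adj x).1 (by exact_mod_cast hx)
  by_cases hyA : y ∈ A
  · have hy : (1 : ℝ) ≤ G.degree y :=
      by exact_mod_cast (G.degree_pos_iff_exists_adj y).2 ⟨x, hxy.symm⟩
    have hpair : vol G {x, y} = G.degree x + G.degree y := sum_pair hxy.ne
    have := vol_mono (G := G) (insert_subset hxA (singleton_subset_iff.2 hyA))
    linarith
  · have hcut : (1 : ℝ) ≤ bdry G A := by
      refine le_trans ?_ (single_le_sum (fun z _ => Nat.cast_nonneg _) hxA)
      exact_mod_cast card_pos.2 ⟨y, by simpa [hyA] using hxy⟩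
    rw [phiCond, div_le_iff₀ hA] at hφ
    linarith

end Graph

section Walk

variable (G : SimpleGraph V) [DecidableRel G.Adj]

lemma walkP_nonneg (x y : V) : 0 ≤ walkP G x y := by
  unfold walkP
  split_ifs <;> positivity

lemma degree_mul_walkP (x y : V) :
    (G.degree x : ℝ) * walkP G x y
      = (if G.Adj x y then 1 / 2 else 0) + if x = y then (G.degree x : ℝ) / 2 else 0 := by
  by_cases hxy : x = y
  · subst hxy
    simp only [walkP, ↓reduceIte, G.irrefl, zero_add]
    ring
  by_cases hadj : G.Adj x y
  · have hx : (G.degree x : ℝ) ≠ 0 :=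
      Nat.cast_ne_zero.2 ((G.degree_pos_iff_exists_adj x).2 ⟨y, hadj⟩).ne'
    simp only [walkP, hxy, hadj, ↓reduceIte, add_zero]
    field_simp
  · simp [walkP, hxy, hadj]

lemma degree_mul_walkP_comm (x y : V) :
    (G.degree x : ℝ) * walkP G x y = G.degree y * walkP G y x := by
  rcases eq_or_ne x y with rfl | hxy
  · rfl
  simp [degree_mul_walkP, G.adj_comm, hxy, hxy.symm]

lemma pset_nonneg (x : V) (S : Finset V) : 0 ≤ pset G x S :=
  sum_nonneg fun _ _ => walkP_nonneg G x _

lemma degree_mul_pset (x : V) (S : Finset V) :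
    (G.degree x : ℝ) * pset G x S
      = (#(S.filter (G.Adj x)) : ℝ) / 2 + if x ∈ S then (G.degree x : ℝ) / 2 else 0 := by
  simp only [pset, mul_sum, degree_mul_walkP, sum_add_distrib, sum_ite_eq, ← sum_filter]
  simp [div_eq_mul_inv]

lemma degree_mul_pset_univ (x : V) : (G.degree x : ℝ) * pset G x univ = G.degree x := by
  have : univ.filter (G.Adj x) = G.neighborFinset x := by ext; simp
  rw [degree_mul_pset, this, G.card_neighborFinset_eq_degree, if_pos (mem_univ x)]
  ring

lemma pset_univ_le_one (x : V) : pset G x univ ≤ 1 := by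
  rcases (Nat.zero_le (G.degree x)).eq_or_lt with hx | hx
  · have : ∀ y, ¬ G.Adj x y := fun y h =>
      hx.not_lt ((G.degree_pos_iff_exists_adj x).2 ⟨y, h⟩)
    calc pset G x univ = 1 / 2 := by simp [pset, walkP, this]
      _ ≤ 1 := by norm_num
  · have hx' : (0 : ℝ) < G.degree x := by exact_mod_cast hx
    have := degree_mul_pset_univ G x
    nlinarith

lemma pset_le_one (x : V) (S : Finset V) : pset G x S ≤ 1 :=
  (sum_le_sum_of_subset_of_nonneg (subset_univ S) fun y _ _ => walkP_nonneg G x y).trans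
    (pset_univ_le_one G x)

lemma half_le_pset_of_mem {x : V} {S : Finset V} (hx : x ∈ S) : 1 / 2 ≤ pset G x S := by
  calc 1 / 2 = walkP G x x := by simp [walkP]
    _ ≤ pset G x S := single_le_sum (fun y _ => walkP_nonneg G x y) hx

lemma pset_le_half_of_notMem {x : V} {S : Finset V} (hx : x ∉ S) : pset G x S ≤ 1 / 2 := by
  have hsplit : pset G x S + pset G x Sᶜ = pset G x univ := sum_add_sum_compl S _
  linarith [pset_univ_le_one G x, half_le_pset_of_mem G (mem_compl.2 hx)]

lemma sum_degree_mul_pset_comm (B S : Finset V) :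
    ∑ x ∈ B, (G.degree x : ℝ) * pset G x S = ∑ y ∈ S, (G.degree y : ℝ) * pset G y B := by
  simp only [pset, mul_sum]
  rw [sum_comm]
  exact sum_congr rfl fun y _ => sum_congr rfl fun x _ => degree_mul_walkP_comm G x y

lemma sum_degree_mul_pset_compl (S : Finset V) :
    ∑ x ∈ S, (G.degree x : ℝ) * pset G x Sᶜ = bdry G S / 2 := by
  rw [bdry, sum_div]
  refine sum_congr rfl fun x hx => ?_
  simp [degree_mul_pset, hx]

end Walk

section Threshold

variable (G : SimpleGraph V) [DecidableRel G.Adj]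

def thresholdKernel (J : Set ℝ) (S S' : Finset V) : ℝ :=
  volume.real (J ∩ {u | esStep G S u = S'})

lemma Kk_eq_thresholdKernel (S S' : Finset V) :
    Kk G S S' = thresholdKernel G (Set.Icc 0 1) S S' := rfl

lemma thresholdKernel_nonneg (J : Set ℝ) (S S' : Finset V) : 0 ≤ thresholdKernel G J S S' :=
  measureReal_nonneg

lemma Kk_nonneg (S S' : Finset V) : 0 ≤ Kk G S S' :=
  thresholdKernel_nonneg G _ S S'

lemma measurableSet_esStep_eq (S S' : Finset V) : MeasurableSet {u : ℝ | esStep G S u = S'} := by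
  have hS' : {u : ℝ | esStep G S u = S'} = ⋂ y, {u | u ≤ pset G y S ↔ y ∈ S'} := by
    ext u; simp [esStep, Finset.ext_iff]
  rw [hS']
  refine MeasurableSet.iInter fun y => ?_
  by_cases hy : y ∈ S'
  · convert (measurableSet_Iic : MeasurableSet (Set.Iic (pset G y S))) using 1
    ext u; simp [hy]
  · convert (measurableSet_Ioi : MeasurableSet (Set.Ioi (pset G y S))) using 1
    ext u; simp [hy]

variable {G} {J : Set ℝ}

lemma sum_thresholdKernel_of_mem (hJ : MeasurableSet J) (hJ' : volume J ≠ ⊤) (S : Finset V)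
    (t : Finset (Finset V)) :
    ∑ S' ∈ t, thresholdKernel G J S S' = volume.real (J ∩ {u | esStep G S u ∈ t}) := by
  have hunion : J ∩ {u | esStep G S u ∈ t} = ⋃ S' ∈ t, J ∩ {u | esStep G S u = S'} := by
    ext u; simp
  rw [hunion]
  refine (measureReal_biUnion_finset ?_ ?_ ?_).symm
  · exact fun a _ b _ hab => Set.disjoint_left.2 fun u hua hub => hab (hua.2.symm.trans hub.2)
  · exact fun S' _ => hJ.inter (measurableSet_esStep_eq G S S')
  · exact fun S' _ => measure_ne_top_of_subset Set.inter_subset_left hJ'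

lemma sum_thresholdKernel (hJ : MeasurableSet J) (hJ' : volume J ≠ ⊤) (S : Finset V) :
    ∑ S', thresholdKernel G J S S' = volume.real J := by
  simp [sum_thresholdKernel_of_mem hJ hJ']

lemma sum_thresholdKernel_mul_sum (hJ : MeasurableSet J) (hJ' : volume J ≠ ⊤) (S : Finset V)
    (g : V → ℝ) :
    ∑ S', thresholdKernel G J S S' * ∑ y ∈ S', g y
      = ∑ y, g y * volume.real (J ∩ Set.Iic (pset G y S)) := by
  have hmem : ∀ y, ∑ S' ∈ univ.filter (y ∈ ·), thresholdKernel G J S S'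
      = volume.real (J ∩ Set.Iic (pset G y S)) := fun y => by
    rw [sum_thresholdKernel_of_mem hJ hJ']
    congr
    ext u
    simp [esStep]
  simp only [← hmem, sum_filter, mul_sum]
  rw [sum_comm]
  refine sum_congr rfl fun S' _ => ?_
  simp only [mul_ite, mul_zero, sum_ite_mem, univ_inter]
  exact sum_congr rfl fun y _ => mul_comm _ _

lemma thresholdKernel_union {J₁ J₂ : Set ℝ} (hd : Disjoint J₁ J₂) (h₂ : MeasurableSet J₂)
    (h₁' : volume J₁ ≠ ⊤) (h₂' : volume J₂ ≠ ⊤) (S S' : Finset V) :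
    thresholdKernel G (J₁ ∪ J₂) S S' = thresholdKernel G J₁ S S' + thresholdKernel G J₂ S S' := by
  rw [thresholdKernel, Set.union_inter_distrib_right]
  exact measureReal_union (hd.mono Set.inter_subset_left Set.inter_subset_left)
    (h₂.inter (measurableSet_esStep_eq G S S'))
    (measure_ne_top_of_subset Set.inter_subset_left h₁')
    (measure_ne_top_of_subset Set.inter_subset_left h₂')

end Threshold

section EvolvingSetKernel

variable (G : SimpleGraph V) [DecidableRel G.Adj]

def walkMatrix : Matrix V V ℝ := Matrix.of (walkP G)

lemma walkMatrix_nonneg (x y : V) : 0 ≤ walkMatrix G x y := walkP_nonneg G x y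

lemma vecMul_walkMatrix_apply (g : V → ℝ) (x : V) :
    (g ᵥ* walkMatrix G) x = ∑ y, g y * walkP G y x := rfl

/-- Duality between the ESP and the lazy walk: one ESP step acts on additive functionals of the
set as one step of the walk acts on measures. -/
lemma sum_Kk_mul_sum (S : Finset V) (g : V → ℝ) :
    ∑ S', Kk G S S' * ∑ y ∈ S', g y = ∑ x ∈ S, (g ᵥ* walkMatrix G) x := by
  have hIcc : ∀ y, volume.real (Set.Icc (0 : ℝ) 1 ∩ Set.Iic (pset G y S)) = pset G y S :=
    fun y => by
      rw [volume_real_Icc_zero_inter_Iic zero_le_one (pset_nonneg G y S),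
        min_eq_right (pset_le_one G y S)]
  simp only [Kk_eq_thresholdKernel]
  rw [sum_thresholdKernel_mul_sum measurableSet_Icc (by simp) S g]
  simp only [hIcc, vecMul_walkMatrix_apply]
  simp only [pset, mul_sum]
  exact sum_comm

lemma vecMul_walkMatrix_degree_indicator (B : Finset V) (x : V) :
    ((fun y => if y ∈ B then (G.degree y : ℝ) else 0) ᵥ* walkMatrix G) x
      = G.degree x * pset G x B := by
  simp only [vecMul_walkMatrix_apply, ite_mul, zero_mul, sum_ite_mem, univ_inter, pset, mul_sum]
  exact sum_congr rfl fun y _ => degree_mul_walkP_comm G y x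

lemma sum_Kk_mul_vol (S : Finset V) : ∑ S', Kk G S S' * vol G S' = vol G S := by
  have h := sum_Kk_mul_sum G S fun y => if y ∈ univ then (G.degree y : ℝ) else 0
  simp only [vecMul_walkMatrix_degree_indicator] at h
  simpa [degree_mul_pset_univ, vol] using h

end EvolvingSetKernel

section MorrisPeres

variable (G : SimpleGraph V) [DecidableRel G.Adj]

lemma Kk_eq_thresholdKernel_add (S S' : Finset V) :
    Kk G S S' = thresholdKernel G (Set.Icc 0 (1 / 2)) S S'
      + thresholdKernel G (Set.Ioc (1 / 2) 1) S S' := by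
  rw [Kk_eq_thresholdKernel,
    ← Set.Icc_union_Ioc_eq_Icc (show (0 : ℝ) ≤ 1 / 2 by norm_num) (by norm_num)]
  exact thresholdKernel_union (Set.disjoint_left.2 fun u hu hu' => hu'.1.not_ge hu.2)
    measurableSet_Ioc (by simp) (by simp) S S'

lemma sum_Kk_mul_eq_add (S : Finset V) (f : Finset V → ℝ) :
    ∑ S', Kk G S S' * f S' = ∑ S', thresholdKernel G (Set.Icc 0 (1 / 2)) S S' * f S'
      + ∑ S', thresholdKernel G (Set.Ioc (1 / 2) 1) S S' * f S' := by
  simp only [Kk_eq_thresholdKernel_add, add_mul, sum_add_distrib]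

lemma sum_thresholdKernel_Icc_half_mul_vol (S : Finset V) :
    ∑ S', thresholdKernel G (Set.Icc 0 (1 / 2)) S S' * vol G S' = (vol G S + bdry G S) / 2 := by
  have hvol : ∀ y, volume.real (Set.Icc (0 : ℝ) (1 / 2) ∩ Set.Iic (pset G y S))
      = if y ∈ S then 1 / 2 else pset G y S := by
    intro y
    rw [volume_real_Icc_zero_inter_Iic (by norm_num) (pset_nonneg G y S)]
    split_ifs with hy
    · exact min_eq_left (half_le_pset_of_mem G hy)
    · exact min_eq_right (pset_le_half_of_notMem G hy)
  have h := sum_thresholdKernel_mul_sum (G := G) (J := Set.Icc 0 (1 / 2)) measurableSet_Icc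
    (by simp) S fun y => (G.degree y : ℝ)
  simp only [hvol, mul_ite] at h
  rw [show ∑ S', thresholdKernel G (Set.Icc 0 (1 / 2)) S S' * vol G S' = _ from h,
    ← sum_add_sum_compl S, sum_ite_of_true fun _ h => h, sum_ite_of_false fun _ h => mem_compl.1 h,
    sum_degree_mul_pset_comm, sum_degree_mul_pset_compl, ← sum_mul, vol]
  ring

lemma sum_Kk_mul_sqrt_vol_le (S : Finset V) :
    ∑ S', Kk G S S' * √(vol G S') ≤ √(vol G S) * (1 - phiCond G S ^ 2 / 8) := by
  have hhalf : ∀ x : ℝ, √(1 / 2 * (x / 2)) = √x / 2 := fun x => by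
    rw [show 1 / 2 * (x / 2) = x / 2 ^ 2 by ring, Real.sqrt_div' _ (by positivity),
      Real.sqrt_sq (by norm_num)]
  have hlow : ∑ S', thresholdKernel G (Set.Icc 0 (1 / 2)) S S' * √(vol G S')
      ≤ √(vol G S + bdry G S) / 2 := by
    refine (sum_mul_sqrt_le_sqrt_mul _ (thresholdKernel_nonneg G _ S) vol_nonneg).trans_eq ?_
    rw [sum_thresholdKernel measurableSet_Icc (by simp), sum_thresholdKernel_Icc_half_mul_vol,
      ← hhalf]
    simp
  have hhigh : ∑ S', thresholdKernel G (Set.Ioc (1 / 2) 1) S S' * √(vol G S')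
      ≤ √(vol G S - bdry G S) / 2 := by
    refine (sum_mul_sqrt_le_sqrt_mul _ (thresholdKernel_nonneg G _ S) vol_nonneg).trans_eq ?_
    have hsum : ∑ S', thresholdKernel G (Set.Ioc (1 / 2) 1) S S' * vol G S'
        = (vol G S - bdry G S) / 2 := by
      linarith [sum_Kk_mul_vol G S, sum_thresholdKernel_Icc_half_mul_vol G S,
        sum_Kk_mul_eq_add G S (vol G)]
    rw [sum_thresholdKernel measurableSet_Ioc (by simp), hsum, ← hhalf]
    norm_num
  calc ∑ S', Kk G S S' * √(vol G S')
      = ∑ S', thresholdKernel G (Set.Icc 0 (1 / 2)) S S' * √(vol G S')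
        + ∑ S', thresholdKernel G (Set.Ioc (1 / 2) 1) S S' * √(vol G S') :=
        sum_Kk_mul_eq_add G S fun S' => √(vol G S')
    _ ≤ (√(vol G S + bdry G S) + √(vol G S - bdry G S)) / 2 := by linarith
    _ ≤ √(vol G S) * (1 - phiCond G S ^ 2 / 8) := by
        rw [phiCond]
        linarith [sqrt_add_add_sqrt_sub_le (bdry_nonneg (G := G) S) (bdry_le_vol S)]

end MorrisPeres

section PathExpectation

variable (κ : Finset V → Finset V → ℝ)

lemma Epath_zero (S₀ : Finset V) (f : (Fin 1 → Finset V) → ℝ) :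
    Epath κ S₀ 0 f = f fun _ => S₀ := by
  rw [Epath, sum_eq_single (fun _ => S₀)]
  · simp
  · intro w _ hw
    rw [if_neg fun h => hw (funext fun i => by rw [Fin.fin_one_eq_zero i, h])]
  · simp

lemma Epath_succ (S₀ : Finset V) (t : ℕ) (f : (Fin (t + 2) → Finset V) → ℝ) :
    Epath κ S₀ (t + 1) f = ∑ S', κ S₀ S' * Epath κ S' t fun v => f (Fin.cons S₀ v) := by
  simp only [Epath, mul_sum]
  rw [← (Fin.consEquiv fun _ => Finset V).sum_comp, Fintype.sum_prod_type, sum_comm]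
  simp only [Fin.consEquiv, Equiv.coe_fn_mk, Fin.cons_zero, Fin.cons_succ, Fin.prod_univ_succ,
    Fin.castSucc_zero, Fin.castSucc_succ, mul_assoc, sum_ite_eq', mem_univ, if_true, mul_ite,
    mul_zero]
  rw [sum_comm]
  simp

variable {κ}

lemma Epath_mono (hκ : ∀ S S', 0 ≤ κ S S') (S₀ : Finset V) (t : ℕ)
    {f g : (Fin (t + 1) → Finset V) → ℝ} (hfg : ∀ w, f w ≤ g w) :
    Epath κ S₀ t f ≤ Epath κ S₀ t g :=
  sum_le_sum fun w _ => by
    split_ifs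
    · exact mul_le_mul_of_nonneg_left (hfg w) (prod_nonneg fun _ _ => hκ _ _)
    · rfl

lemma Epath_nonneg (hκ : ∀ S S', 0 ≤ κ S S') (S₀ : Finset V) (t : ℕ)
    {f : (Fin (t + 1) → Finset V) → ℝ} (hf : ∀ w, 0 ≤ f w) : 0 ≤ Epath κ S₀ t f := by
  simpa [Epath] using Epath_mono hκ S₀ t hf

lemma Epath_sub (S₀ : Finset V) (t : ℕ) (f g : (Fin (t + 1) → Finset V) → ℝ) :
    Epath κ S₀ t (fun w => f w - g w) = Epath κ S₀ t f - Epath κ S₀ t g := by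
  simp only [Epath, ← sum_sub_distrib]
  exact sum_congr rfl fun w _ => by split_ifs <;> ring

lemma Epath_const_mul (S₀ : Finset V) (t : ℕ) (c : ℝ) (f : (Fin (t + 1) → Finset V) → ℝ) :
    Epath κ S₀ t (fun w => c * f w) = c * Epath κ S₀ t f := by
  simp only [Epath, mul_sum]
  exact sum_congr rfl fun w _ => by split_ifs <;> ring

lemma Epath_forall_mul_le_pow (hκ : ∀ S S', 0 ≤ κ S S') {P : Finset V → Prop}
    {g : Finset V → ℝ} (hg : ∀ S, 0 ≤ g S) {r : ℝ} (hr : 0 ≤ r)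
    (hstep : ∀ S, P S → ∑ S', κ S S' * g S' ≤ r * g S) (t : ℕ) (S₀ : Finset V) :
    Epath κ S₀ t (fun w => (if ∀ j, P (w j) then 1 else 0) * g (w (Fin.last t)))
      ≤ r ^ t * g S₀ := by
  induction t generalizing S₀ with
  | zero =>
    rw [Epath_zero]
    split_ifs <;> simp [hg]
  | succ t ih =>
    rw [Epath_succ]
    by_cases hS : P S₀
    · calc ∑ S', κ S₀ S' * Epath κ S' t _
          ≤ ∑ S', κ S₀ S' * (r ^ t * g S') := by
            refine sum_le_sum fun S' _ => mul_le_mul_of_nonneg_left ?_ (hκ _ _)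
            simpa [Fin.forall_fin_succ, hS] using ih S'
        _ = r ^ t * ∑ S', κ S₀ S' * g S' := by
            rw [mul_sum]; exact sum_congr rfl fun _ _ => by ring
        _ ≤ r ^ (t + 1) * g S₀ := by
            rw [pow_succ, mul_assoc]
            exact mul_le_mul_of_nonneg_left (hstep S₀ hS) (pow_nonneg hr t)
    · simp only [Epath, Fin.forall_fin_succ, Fin.cons_zero, hS, false_and, if_false, zero_mul,
        mul_zero, ite_self, sum_const_zero]
      exact mul_nonneg (pow_nonneg hr _) (hg S₀)

end PathExpectation

section VolumeBiased

variable (G : SimpleGraph V) [DecidableRel G.Adj]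

lemma Khat_nonneg (S S' : Finset V) : 0 ≤ Khat G S S' :=
  mul_nonneg (div_nonneg (vol_nonneg S') (vol_nonneg S)) (Kk_nonneg G S S')

lemma vol_mul_Khat {S : Finset V} (hS : vol G S ≠ 0) (S' : Finset V) :
    vol G S * Khat G S S' = Kk G S S' * vol G S' := by
  rw [Khat]
  field_simp

lemma sum_Khat {S : Finset V} (hS : vol G S ≠ 0) : ∑ S', Khat G S S' = 1 := by
  refine mul_left_cancel₀ hS ?_
  rw [mul_sum, mul_one]
  simp only [vol_mul_Khat G hS]
  exact sum_Kk_mul_vol G S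

lemma sum_Khat_le_one (S : Finset V) : ∑ S', Khat G S S' ≤ 1 := by
  by_cases hS : vol G S = 0
  · simp [Khat, hS]
  · exact (sum_Khat G hS).le

lemma sum_Khat_mul_inv_sqrt_vol_le (S : Finset V) :
    ∑ S', Khat G S S' * (√(vol G S'))⁻¹ ≤ (1 - phiCond G S ^ 2 / 8) * (√(vol G S))⁻¹ := by
  have hterm : ∀ S', Khat G S S' * (√(vol G S'))⁻¹ = (vol G S)⁻¹ * (Kk G S S' * √(vol G S')) := by
    intro S'
    have h := Real.div_sqrt (x := vol G S')
    rw [div_eq_mul_inv] at h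
    rw [Khat]
    linear_combination (vol G S)⁻¹ * Kk G S S' * h
  rw [sum_congr rfl fun S' _ => hterm S', ← mul_sum]
  calc (vol G S)⁻¹ * ∑ S', Kk G S S' * √(vol G S')
      ≤ (vol G S)⁻¹ * (√(vol G S) * (1 - phiCond G S ^ 2 / 8)) :=
        mul_le_mul_of_nonneg_left (sum_Kk_mul_sqrt_vol_le G S) (inv_nonneg.2 (vol_nonneg S))
    _ = (1 - phiCond G S ^ 2 / 8) * (√(vol G S))⁻¹ := by
        have hinv : (vol G S)⁻¹ * √(vol G S) = (√(vol G S))⁻¹ := by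
          rw [inv_mul_eq_div, Real.sqrt_div_self', one_div]
        rw [← hinv]
        ring

lemma Epath_Khat_le_one (t : ℕ) (S₀ : Finset V) {f : (Fin (t + 1) → Finset V) → ℝ}
    (hf : ∀ w, f w ≤ 1) : Epath (Khat G) S₀ t f ≤ 1 := by
  induction t generalizing S₀ with
  | zero => exact (Epath_zero _ S₀ f).trans_le (hf _)
  | succ t ih =>
    rw [Epath_succ]
    calc ∑ S', Khat G S₀ S' * Epath (Khat G) S' t _ ≤ ∑ S', Khat G S₀ S' * 1 :=
          sum_le_sum fun S' _ => mul_le_mul_of_nonneg_left (ih S' fun v => hf _) (Khat_nonneg G _ _)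
      _ ≤ 1 := by simpa using sum_Khat_le_one G S₀

lemma Epath_Khat_one {S₀ : Finset V} (hS₀ : vol G S₀ ≠ 0) (t : ℕ) :
    Epath (Khat G) S₀ t (fun _ => 1) = 1 := by
  induction t generalizing S₀ with
  | zero => exact Epath_zero _ S₀ _
  | succ t ih =>
    rw [Epath_succ]
    refine (sum_congr rfl fun S' _ => ?_).trans (sum_Khat G hS₀)
    by_cases hS' : vol G S' = 0
    · simp [Khat, hS']
    · rw [ih hS', mul_one]

lemma Epath_Khat_forall_le_phiCond_le {c : ℝ} (hc : 0 < c) (t : ℕ) (S₀ : Finset V) :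
    Epath (Khat G) S₀ t (fun w => if ∀ j, c ≤ phiCond G (w j) then 1 else 0)
      ≤ √(vol G univ) * max 0 (1 - c ^ 2 / 8) ^ t * (√(vol G S₀))⁻¹ := by
  have hstep : ∀ S, c ≤ phiCond G S →
      ∑ S', Khat G S S' * (√(vol G S'))⁻¹ ≤ max 0 (1 - c ^ 2 / 8) * (√(vol G S))⁻¹ := by
    intro S hS
    refine (sum_Khat_mul_inv_sqrt_vol_le G S).trans (mul_le_mul_of_nonneg_right ?_ (by positivity))
    exact le_max_of_le_right (by nlinarith [pow_le_pow_left₀ hc.le hS 2])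
  calc Epath (Khat G) S₀ t (fun w => if ∀ j, c ≤ phiCond G (w j) then 1 else 0)
      ≤ Epath (Khat G) S₀ t (fun w => √(vol G univ)
          * ((if ∀ j, c ≤ phiCond G (w j) then 1 else 0) * (√(vol G (w (Fin.last t))))⁻¹)) := by
        refine Epath_mono (Khat_nonneg G) S₀ t fun w => ?_
        split_ifs with hw
        · have hpos := vol_pos_of_phiCond_pos (hc.trans_le (hw (Fin.last t)))
          rw [one_mul, ← div_eq_mul_inv, one_le_div (Real.sqrt_pos.2 hpos)]
          exact Real.sqrt_le_sqrt (vol_mono (subset_univ _))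
        · simp
    _ ≤ √(vol G univ) * (max 0 (1 - c ^ 2 / 8) ^ t * (√(vol G S₀))⁻¹) := by
        rw [Epath_const_mul]
        exact mul_le_mul_of_nonneg_left (Epath_forall_mul_le_pow (Khat_nonneg G)
          (fun S => by positivity) (le_max_left _ _) hstep t S₀) (Real.sqrt_nonneg _)
    _ = √(vol G univ) * max 0 (1 - c ^ 2 / 8) ^ t * (√(vol G S₀))⁻¹ := by ring

lemma degree_mul_Epath_Khat_forall_le_phiCond_le {T : ℕ} (hT : 0 < T) (hU : 3 ≤ vol G univ)
    (x : V) :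
    G.degree x * Epath (Khat G) {x} T (fun w =>
        if ∀ j, 3 * √(4 * Real.log (vol G univ) / T) ≤ phiCond G (w j) then 1 else 0)
      ≤ G.degree x / 81 := by
  rcases (Nat.zero_le (G.degree x)).eq_or_lt with hx | hx
  · simp [← hx]
  have hc : 0 < 3 * √(4 * Real.log (vol G univ) / T) := by
    have := Real.log_pos (show 1 < vol G univ by linarith)
    positivity
  have hx1 : (√(vol G {x}))⁻¹ ≤ 1 := by
    refine inv_le_one_of_one_le₀ (Real.one_le_sqrt.2 ?_)
    rw [vol, sum_singleton]
    exact Nat.one_le_cast.2 hx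
  rw [show (G.degree x : ℝ) / 81 = G.degree x * (1 / 81) by ring]
  refine mul_le_mul_of_nonneg_left ?_ (Nat.cast_nonneg _)
  exact (Epath_Khat_forall_le_phiCond_le G hc T {x}).trans
    ((mul_le_of_le_one_right (by positivity) hx1).trans (sqrt_mul_max_pow_le hU hT))

end VolumeBiased


section WalkPowers

variable (G : SimpleGraph V) [DecidableRel G.Adj] {v : V → ℝ}

lemma vecMul_walkMatrix_pow_nonneg (hv : 0 ≤ v) (s : ℕ) : 0 ≤ v ᵥ* walkMatrix G ^ s := by
  induction s with
  | zero => simpa using hv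
  | succ s ih =>
    rw [pow_succ, ← vecMul_vecMul]
    exact fun x => sum_nonneg fun y _ => mul_nonneg (ih y) (walkMatrix_nonneg G y x)

lemma sum_vecMul_walkMatrix_pow_le (hv : 0 ≤ v) (s : ℕ) :
    ∑ x, (v ᵥ* walkMatrix G ^ s) x ≤ ∑ x, v x := by
  induction s with
  | zero => simp
  | succ s ih =>
    refine le_trans ?_ ih
    rw [pow_succ, ← vecMul_vecMul]
    simp only [vecMul_walkMatrix_apply]
    rw [sum_comm]
    refine sum_le_sum fun y _ => ?_
    rw [← mul_sum]
    exact mul_le_of_le_one_right (vecMul_walkMatrix_pow_nonneg G hv s y) (pset_univ_le_one G y)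

end WalkPowers

section Escape

variable (G : SimpleGraph V) [DecidableRel G.Adj] (A : Finset V)

def IsEscaped (S : Finset V) : Prop := vol G S < 10 * vol G (S \ A)

/-- Half the number of edges from `z ∈ A` to `Aᶜ`. -/
def leakage (z : V) : ℝ := if z ∈ A then G.degree z * pset G z Aᶜ else 0

lemma leakage_nonneg : 0 ≤ leakage G A := fun z => by
  unfold leakage
  split_ifs
  · exact mul_nonneg (Nat.cast_nonneg _) (pset_nonneg G z _)
  · rfl

lemma sum_leakage : ∑ z, leakage G A z = bdry G A / 2 := by
  simp [leakage, sum_ite_mem, sum_degree_mul_pset_compl]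

lemma sum_Kk_mul_vol_sdiff_le (S : Finset V) :
    ∑ S', Kk G S S' * vol G (S' \ A) ≤ vol G (S \ A) + ∑ z ∈ S, leakage G A z := by
  have hsdiff : ∀ S' : Finset V,
      vol G (S' \ A) = ∑ y ∈ S', if y ∈ Aᶜ then (G.degree y : ℝ) else 0 := fun S' => by
    rw [sum_ite_mem, ← sdiff_eq_inter_compl, vol]
  simp only [hsdiff, sum_Kk_mul_sum, vecMul_walkMatrix_degree_indicator, ← sum_add_distrib]
  refine sum_le_sum fun x _ => ?_
  by_cases hx : x ∈ A
  · simp [leakage, hx]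
  · simpa [leakage, hx] using mul_le_of_le_one_right (Nat.cast_nonneg _) (pset_le_one G x Aᶜ)

/-- `stoppedEscape t S` is `E[μ(S_{τ ∧ t} \ A)]` for the evolving set process started at `S`,
where `τ` is the first time the process is escaped. -/
def stoppedEscape : ℕ → Finset V → ℝ
  | 0, S => vol G (S \ A)
  | t + 1, S => if IsEscaped G A S then vol G (S \ A) else ∑ S', Kk G S S' * stoppedEscape t S'

lemma stoppedEscape_nonneg (t : ℕ) (S : Finset V) : 0 ≤ stoppedEscape G A t S := by
  induction t generalizing S with
  | zero => exact vol_nonneg _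
  | succ t ih =>
    unfold stoppedEscape
    split_ifs
    · exact vol_nonneg _
    · exact sum_nonneg fun S' _ => mul_nonneg (Kk_nonneg G S S') (ih S')

/-- The escaped volume grows in expectation only by the leakage, which the process carries along
like the walk carries a measure. -/
lemma stoppedEscape_le (t : ℕ) (S : Finset V) :
    stoppedEscape G A t S
      ≤ vol G (S \ A) + ∑ s ∈ range t, ∑ y ∈ S, (leakage G A ᵥ* walkMatrix G ^ s) y := by
  induction t generalizing S with
  | zero => simp [stoppedEscape]
  | succ t ih =>
    have hL := vecMul_walkMatrix_pow_nonneg G (leakage_nonneg G A)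
    unfold stoppedEscape
    split_ifs
    · exact le_add_of_nonneg_right (sum_nonneg fun s _ => sum_nonneg fun y _ => hL s y)
    calc ∑ S', Kk G S S' * stoppedEscape G A t S'
        ≤ ∑ S', Kk G S S' * (vol G (S' \ A)
            + ∑ s ∈ range t, ∑ y ∈ S', (leakage G A ᵥ* walkMatrix G ^ s) y) :=
          sum_le_sum fun S' _ => mul_le_mul_of_nonneg_left (ih S') (Kk_nonneg G S S')
      _ = ∑ S', Kk G S S' * vol G (S' \ A)
            + ∑ s ∈ range t, ∑ y ∈ S, (leakage G A ᵥ* walkMatrix G ^ (s + 1)) y := by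
          simp only [mul_add, sum_add_distrib, mul_sum]
          rw [sum_comm (s := univ)]
          simp only [← mul_sum, sum_Kk_mul_sum, vecMul_vecMul, ← pow_succ]
      _ ≤ vol G (S \ A) + ∑ s ∈ range (t + 1), ∑ y ∈ S, (leakage G A ᵥ* walkMatrix G ^ s) y := by
          rw [sum_range_succ' _ t, pow_zero, vecMul_one]
          linarith [sum_Kk_mul_vol_sdiff_le G A S]

lemma vol_mul_Epath_Khat_exists_isEscaped_le (t : ℕ) (S : Finset V) :
    vol G S * Epath (Khat G) S t (fun w => if ∃ j, IsEscaped G A (w j) then 1 else 0)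
      ≤ 10 * stoppedEscape G A t S := by
  induction t generalizing S with
  | zero =>
    rw [Epath_zero, stoppedEscape]
    by_cases hS : IsEscaped G A S
    · simpa [hS] using hS.le
    · simpa [hS] using vol_nonneg (S \ A)
  | succ t ih =>
    by_cases hS0 : vol G S = 0
    · simpa [hS0] using stoppedEscape_nonneg G A (t + 1) S
    rw [stoppedEscape]
    split_ifs with hS
    · calc vol G S * Epath (Khat G) S (t + 1) _ ≤ vol G S * 1 :=
            mul_le_mul_of_nonneg_left (Epath_Khat_le_one G _ S fun w => by split_ifs <;> norm_num)
              (vol_nonneg S)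
        _ ≤ 10 * vol G (S \ A) := by rw [mul_one]; exact hS.le
    have hcons : ∀ v : Fin (t + 1) → Finset V,
        (∃ j, IsEscaped G A ((Fin.cons S v : Fin (t + 2) → Finset V) j)) ↔
          ∃ j, IsEscaped G A (v j) := fun v => by
      simp [Fin.exists_fin_succ (n := t + 1), hS]
    rw [Epath_succ]
    simp only [hcons]
    calc vol G S * ∑ S', Khat G S S' * Epath (Khat G) S' t _
        = ∑ S', Kk G S S' * (vol G S' * Epath (Khat G) S' t
            (fun w => if ∃ j, IsEscaped G A (w j) then 1 else 0)) := by
          rw [mul_sum]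
          exact sum_congr rfl fun S' _ => by rw [← mul_assoc, vol_mul_Khat G hS0, mul_assoc]
      _ ≤ ∑ S', Kk G S S' * (10 * stoppedEscape G A t S') :=
          sum_le_sum fun S' _ => mul_le_mul_of_nonneg_left (ih S') (Kk_nonneg G S S')
      _ = 10 * ∑ S', Kk G S S' * stoppedEscape G A t S' := by
          rw [mul_sum]; exact sum_congr rfl fun _ _ => by ring

lemma sum_degree_mul_Epath_Khat_exists_isEscaped_le (T : ℕ) :
    ∑ x ∈ A, G.degree x * Epath (Khat G) {x} T (fun w => if ∃ j, IsEscaped G A (w j) then 1 else 0)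
      ≤ 5 * T * bdry G A := by
  calc ∑ x ∈ A, G.degree x * Epath (Khat G) {x} T _
      ≤ ∑ x ∈ A, 10 * ∑ s ∈ range T, (leakage G A ᵥ* walkMatrix G ^ s) x := by
        refine sum_le_sum fun x hx => ?_
        have h := vol_mul_Epath_Khat_exists_isEscaped_le G A T {x}
        have hesc := stoppedEscape_le G A T {x}
        simp only [vol, sum_singleton, sdiff_eq_empty_iff_subset.2 (singleton_subset_iff.2 hx),
          sum_empty, zero_add] at h hesc
        linarith
    _ = 10 * ∑ s ∈ range T, ∑ x ∈ A, (leakage G A ᵥ* walkMatrix G ^ s) x := by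
        rw [← mul_sum, sum_comm]
    _ ≤ 10 * ∑ s ∈ range T, bdry G A / 2 := by
        gcongr with s
        rw [← sum_leakage]
        have hL := leakage_nonneg G A
        exact (sum_le_univ_sum_of_nonneg (vecMul_walkMatrix_pow_nonneg G hL s)).trans
          (sum_vecMul_walkMatrix_pow_le G hL s)
    _ = 5 * T * bdry G A := by
        rw [sum_const, card_range, nsmul_eq_mul]
        ring

end Escape

section GoodPaths

variable {G : SimpleGraph V} [DecidableRel G.Adj] {A : Finset V}

lemma nine_tenths_vol_le_of_not_isEscaped {S : Finset V} (hS : ¬ IsEscaped G A S) :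
    9 / 10 * vol G S ≤ vol G (S ∩ A) := by
  have hsplit : vol G (S ∩ A) + vol G (S \ A) = vol G S := sum_inter_add_sum_sdiff S A _
  rw [IsEscaped, not_lt] at hS
  linarith

lemma vol_le_of_not_isEscaped {S : Finset V} (hS : ¬ IsEscaped G A S)
    (hA : vol G A ≤ 2 / 3 * vol G univ) : vol G S ≤ 3 / 4 * vol G univ := by
  have hSA : vol G (S ∩ A) ≤ vol G A := vol_mono inter_subset_right
  linarith [nine_tenths_vol_le_of_not_isEscaped hS, vol_nonneg (G := G) univ]

lemma one_sub_Epath_Khat_sub_Epath_Khat_le (hA : vol G A ≤ 2 / 3 * vol G univ) (c : ℝ)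
    {S₀ : Finset V} (hS₀ : vol G S₀ ≠ 0) (t : ℕ) :
    1 - Epath (Khat G) S₀ t (fun w => if ∀ j, c ≤ phiCond G (w j) then 1 else 0)
        - Epath (Khat G) S₀ t (fun w => if ∃ j, IsEscaped G A (w j) then 1 else 0)
      ≤ Epath (Khat G) S₀ t fun w =>
          if (∃ i, phiCond G (w i) < c) ∧ (∀ j, vol G (w j) ≤ 3 / 4 * vol G univ) ∧
            (∀ j, 9 / 10 * vol G (w j) ≤ vol G (w j ∩ A)) then 1 else 0 := by
  have h : Epath (Khat G) S₀ t (fun w => 1 - (if ∀ j, c ≤ phiCond G (w j) then 1 else 0)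
        - (if ∃ j, IsEscaped G A (w j) then 1 else 0))
      ≤ Epath (Khat G) S₀ t fun w =>
          if (∃ i, phiCond G (w i) < c) ∧ (∀ j, vol G (w j) ≤ 3 / 4 * vol G univ) ∧
            (∀ j, 9 / 10 * vol G (w j) ≤ vol G (w j ∩ A)) then 1 else 0 :=
    Epath_mono (Khat_nonneg G) S₀ t fun w => by
      by_cases h₁ : ∀ j, c ≤ phiCond G (w j)
      · rw [if_pos h₁]
        split_ifs <;> norm_num
      by_cases h₃ : ∃ j, IsEscaped G A (w j)
      · rw [if_pos h₃]
        split_ifs <;> norm_num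
      rw [if_neg h₁, if_neg h₃, if_pos]
      · norm_num
      simp only [not_forall, not_le, not_exists] at h₁ h₃
      exact ⟨h₁, fun j => vol_le_of_not_isEscaped (h₃ j) hA,
        fun j => nine_tenths_vol_le_of_not_isEscaped (h₃ j)⟩
  rwa [Epath_sub, Epath_sub, Epath_Khat_one G hS₀] at h

lemma sum_degree_mul_Epath_Khat_add_Epath_Khat_le {T : ℕ} (hT : 0 < T) (hA : 0 < vol G A)
    (hvol : vol G A ≤ 2 / 3 * vol G univ) (hcond : phiCond G A ≤ 1 / (100 * T)) :
    ∑ x ∈ A, G.degree x *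
        (Epath (Khat G) {x} T (fun w =>
            if ∀ j, 3 * √(4 * Real.log (vol G univ) / T) ≤ phiCond G (w j) then 1 else 0)
          + Epath (Khat G) {x} T (fun w => if ∃ j, IsEscaped G A (w j) then 1 else 0))
      ≤ 1 / 9 * vol G A := by
  have hT' : (1 : ℝ) ≤ T := by exact_mod_cast hT
  have hU : 3 ≤ vol G univ := by
    have := two_le_vol_of_phiCond_le_half hA
      (hcond.trans (by rw [div_le_div_iff₀ (by positivity) two_pos]; linarith))
    linarith
  have hbdry : 5 * T * bdry G A ≤ vol G A / 20 := by
    rw [phiCond, div_le_div_iff₀ hA (by positivity)] at hcond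
    nlinarith
  have h₁ : ∑ x ∈ A, G.degree x * Epath (Khat G) {x} T (fun w =>
      if ∀ j, 3 * √(4 * Real.log (vol G univ) / T) ≤ phiCond G (w j) then 1 else 0)
      ≤ vol G A / 81 :=
    (sum_le_sum fun x _ => degree_mul_Epath_Khat_forall_le_phiCond_le G hT hU x).trans_eq
      (sum_div _ _ _).symm
  simp only [mul_add, sum_add_distrib]
  linarith [sum_degree_mul_Epath_Khat_exists_isEscaped_le G A T]

end GoodPaths

/-- Theorem (local partitioning via the volume-biased ESP): fix a positive integer `T`
and a set `A` with `μ(A) ≤ (2/3) μ(V)` and `φ(A) ≤ 1/(100 T)`. Then there is a subset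
`A_T ⊆ A` of volume at least `μ(A)/2` such that for every `x ∈ A_T`, with probability
at least `7/9` a sample path `(S₀, …, S_T)` of the volume-biased ESP started from
`S₀ = {x}` satisfies: (1) `φ(S_t) < 3θ_T` for some `t ≤ T`, where
`θ_T = √(4 T⁻¹ log μ(V))`; (2) `μ(S_j) ≤ (3/4) μ(V)` for all `j ≤ T`; and
(3) `μ(S_j ∩ A) ≥ (9/10) μ(S_j)` for all `j ≤ T`. -/
theorem statement14 (G : SimpleGraph V) [DecidableRel G.Adj]
    (T : ℕ) (hT : 0 < T) (A : Finset V)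
    (hvol : vol G A ≤ 2/3 * vol G Finset.univ)
    (hcond : phiCond G A ≤ 1 / (100 * T)) :
    ∃ AT : Finset V, AT ⊆ A ∧ vol G A / 2 ≤ vol G AT ∧
      ∀ x ∈ AT,
        (7:ℝ)/9 ≤ Epath (Khat G) {x} T fun w =>
          if (∃ t : Fin (T+1),
                phiCond G (w t) < 3 * Real.sqrt (4 * Real.log (vol G Finset.univ) / T)) ∧
             (∀ j : Fin (T+1), vol G (w j) ≤ 3/4 * vol G Finset.univ) ∧
             (∀ j : Fin (T+1), 9/10 * vol G (w j) ≤ vol G (w j ∩ A))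
          then 1 else 0 := by
  rcases (vol_nonneg (G := G) A).eq_or_lt with hA | hA
  · exact ⟨∅, empty_subset A, by rw [← hA]; simp [vol], by simp⟩
  set P₁ : V → ℝ := fun x => Epath (Khat G) {x} T fun w =>
    if ∀ j, 3 * √(4 * Real.log (vol G univ) / T) ≤ phiCond G (w j) then 1 else 0
  set P₃ : V → ℝ := fun x =>
    Epath (Khat G) {x} T fun w => if ∃ j, IsEscaped G A (w j) then 1 else 0
  have hP : ∑ x ∈ A, G.degree x * (P₁ x + P₃ x) ≤ 2 / 9 / 2 * vol G A :=
    (sum_degree_mul_Epath_Khat_add_Epath_Khat_le hT hA hvol hcond).trans_eq (by ring)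
  have hP_nonneg : ∀ x, 0 ≤ P₁ x + P₃ x := fun x =>
    add_nonneg (Epath_nonneg (Khat_nonneg G) _ _ fun w => by split_ifs <;> norm_num)
      (Epath_nonneg (Khat_nonneg G) _ _ fun w => by split_ifs <;> norm_num)
  refine ⟨(A.filter (fun x => P₁ x + P₃ x ≤ 2 / 9)).filter (0 < G.degree ·),
    (filter_subset _ _).trans (filter_subset _ _), ?_, fun x hx => ?_⟩
  · rw [vol_filter_degree_pos]
    exact half_vol_le_vol_filter_le A hP_nonneg (by norm_num) hP
  · simp only [mem_filter] at hx
    have hx0 : vol G {x} ≠ 0 := by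
      rw [vol, sum_singleton]
      exact_mod_cast hx.2.ne'
    linarith [one_sub_Epath_Khat_sub_Epath_Khat_le hvol
      (3 * √(4 * Real.log (vol G univ) / T)) hx0 T]
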